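/- Fix v₀ ∈ ℝⁿ, u ∈ ℝⁿ, and a unit vector ω. Let u' = u - ((u-v₀)·ω)ω, v' = v₀ + ((u-v₀)·ω)ω. Then the quantity P := exp(‖u'-v₀‖²) + exp(‖v'-v₀‖²) - exp(‖v₀-v₀‖²) - exp(‖u-v₀‖²) satisfies P = (1 - exp(-|(v₀-u)·ω|²))(exp(|(v₀-u)·ω|²) - exp(‖u-v₀‖²)), and consequently P ≤ 0. -/
import Mathlib


open scoped RealInnerProductSpace

theorem P_factorization_nonpos {n : ℕ} (hn : 1 ≤ n)
    (v₀ u ω : EuclideanSpace ℝ (Fin n)) (hω : ‖ω‖ = 1)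
    (u' v' : EuclideanSpace ℝ (Fin n))
    (hu' : u' = u - ⟪u - v₀, ω⟫ • ω) (hv' : v' = v₀ + ⟪u - v₀, ω⟫ • ω)
    (P : ℝ)
    (hP : P = Real.exp (‖u' - v₀‖ ^ 2) + Real.exp (‖v' - v₀‖ ^ 2)
        - Real.exp (‖v₀ - v₀‖ ^ 2) - Real.exp (‖u - v₀‖ ^ 2)) :
    P = (1 - Real.exp (-|⟪v₀ - u, ω⟫| ^ 2)) *
        (Real.exp (|⟪v₀ - u, ω⟫| ^ 2) - Real.exp (‖u - v₀‖ ^ 2)) ∧ P ≤ 0 := by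
  set a : ℝ := ⟪u - v₀, ω⟫ with ha
  have hneg : ⟪v₀ - u, ω⟫ = -a := by
    rw [ha, ← inner_neg_left]; congr 1; abel
  have habs : |⟪v₀ - u, ω⟫| ^ 2 = a ^ 2 := by rw [hneg]; rw [sq_abs]; ring
  have hv'norm : ‖v' - v₀‖ ^ 2 = a ^ 2 := by
    rw [hv']
    simp [norm_smul, mul_pow, hω, sq_abs]
  have hu'norm : ‖u' - v₀‖ ^ 2 = ‖u - v₀‖ ^ 2 - a ^ 2 := by
    have : u' - v₀ = (u - v₀) - a • ω := by rw [hu']; abel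
    rw [this]
    rw [norm_sub_sq_real, real_inner_smul_right, ← ha, norm_smul, hω]
    simp [sq_abs]
    ring
  have hCS : a ^ 2 ≤ ‖u - v₀‖ ^ 2 := by
    have h := abs_real_inner_le_norm (u - v₀) ω
    rw [hω, mul_one] at h
    calc a ^ 2 = |a| ^ 2 := (sq_abs a).symm
    _ ≤ ‖u - v₀‖ ^ 2 := by gcongr
  have hfac : P = (1 - Real.exp (-|⟪v₀ - u, ω⟫| ^ 2)) *
      (Real.exp (|⟪v₀ - u, ω⟫| ^ 2) - Real.exp (‖u - v₀‖ ^ 2)) := by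
    rw [hP, habs, hv'norm, hu'norm]
    have h1 : ‖u - v₀‖ ^ 2 - a ^ 2 = ‖u - v₀‖ ^ 2 + (-(a^2)) := by ring
    simp only [sub_self, norm_zero, h1, Real.exp_add, Real.exp_zero]
    have h2 : Real.exp (-a^2) * Real.exp (a^2) = 1 := by
      rw [← Real.exp_add]; simp
    have h3 : Real.exp ((0:ℝ)^2) = 1 := by norm_num
    nlinarith [h2, h3]
  refine ⟨hfac, ?_⟩
  rw [hfac]
  apply mul_nonpos_of_nonneg_of_nonpos
  · have : Real.exp (-|⟪v₀ - u, ω⟫| ^ 2) ≤ 1 := by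
      rw [Real.exp_le_one_iff]
      have : (0:ℝ) ≤ |⟪v₀ - u, ω⟫| ^ 2 := sq_nonneg _
      linarith
    linarith
  · have : Real.exp (|⟪v₀ - u, ω⟫| ^ 2) ≤ Real.exp (‖u - v₀‖ ^ 2) := by
      rw [Real.exp_le_exp, habs]; exact hCS
    linarith
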